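/- Let S be a Tribonacci representation set with 3 ∈ S, let n = ∑_{i∈S} T(i) (a first-column entry of the Trithoff array), and let w = ∑_{i∈S} T(i−1) (the wall term of its row). Then out(w) = n + 1; that is, a wall term w is followed in its row by out(w) − 1. -/

import Mathlib

/-- The Tribonacci sequence: T(0)=0, T(1)=0, T(2)=1,
    T(n+3) = T(n+2) + T(n+1) + T(n). -/
def trib : ℕ → ℕ
  | 0 => 0
  | 1 => 0
  | 2 => 1
  | n + 3 => trib (n + 2) + trib (n + 1) + trib n

/-- A Tribonacci representation set: a finite set of naturals, all at least 3,
    containing no three consecutive integers. -/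
def IsTribRep (S : Finset ℕ) : Prop :=
  (∀ i ∈ S, 3 ≤ i) ∧ ∀ i : ℕ, ¬(i ∈ S ∧ i + 1 ∈ S ∧ i + 2 ∈ S)

/-! Write `S = {3} ∪ (s + 1)`, so that `w = T(2) + ∑_{i∈s} T(i)` and
`n = T(3) + ∑_{i∈s} T(i+1)`. Replace `T(2)` by `T(3)` (or, when `3 ∈ s` and hence `4 ∉ s`,
merge `T(2) + T(3)` into `T(4)`) and carry `T(j) + T(j+1) + T(j+2) = T(j+3)` upwards; this
gives a representation set of `w`. The carries are instances of the recurrence and so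
commute with `out`; only the first step does not, and it raises `out` by exactly one
(`T(4) = T(3) + 1`, resp. `T(5) = T(3) + T(4) + 1`). Uniqueness of representations
identifies the resulting set with the given one. -/

theorem trib_add_three (n : ℕ) : trib (n + 3) = trib (n + 2) + trib (n + 1) + trib n := rfl

theorem trib_monotone : Monotone trib := by
  refine monotone_nat_of_le_succ fun n => ?_
  match n with
  | 0 | 1 | 2 => decide
  | n + 3 =>
    show trib (n + 3) ≤ trib (n + 4)
    have : trib (n + 4) = trib (n + 3) + trib (n + 2) + trib (n + 1) := trib_add_three (n + 1)
    omega

theorem trib_pos {n : ℕ} (hn : 2 ≤ n) : 0 < trib n :=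
  Nat.lt_of_lt_of_le (by decide) (trib_monotone hn)

namespace IsTribRep

theorem mono {A B : Finset ℕ} (hA : IsTribRep A) (hBA : B ⊆ A) : IsTribRep B :=
  ⟨fun i hi => hA.1 i (hBA hi), fun i hi => hA.2 i ⟨hBA hi.1, hBA hi.2.1, hBA hi.2.2⟩⟩

theorem sum_trib_lt {C : Finset ℕ} (hC : IsTribRep C) {k : ℕ} (hk : 2 ≤ k)
    (hlt : ∀ i ∈ C, i < k) : ∑ i ∈ C, trib i < trib k := by
  induction k using Nat.strong_induction_on generalizing C with
  | _ k ih =>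
  obtain hk3 | ⟨m, rfl⟩ : k ≤ 3 ∨ ∃ m, k = m + 4 := by
    rcases Nat.lt_or_ge k 4 with h | h
    exacts [Or.inl (by omega), Or.inr ⟨k - 4, by omega⟩]
  · have hC0 : C = ∅ := Finset.eq_empty_of_forall_notMem fun i hi => by
      have := hC.1 i hi; have := hlt i hi; omega
    simpa [hC0] using trib_pos hk
  have hrec : trib (m + 4) = trib (m + 3) + trib (m + 2) + trib (m + 1) := trib_add_three (m + 1)
  by_cases h3 : m + 3 ∈ C
  · rw [← Finset.add_sum_erase C _ h3]
    by_cases h2 : m + 2 ∈ C.erase (m + 3)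
    · rw [← Finset.add_sum_erase _ _ h2]
      have h1 : m + 1 ∉ C := fun h1 => hC.2 (m + 1) ⟨h1, (Finset.mem_erase.1 h2).2, h3⟩
      have := hC.1 _ (Finset.mem_of_mem_erase h2)
      have := ih (m + 1) (by omega) (hC.mono ((Finset.erase_subset (m + 2) _).trans
        (Finset.erase_subset (m + 3) C))) (by omega) fun i hi => by
          simp only [Finset.mem_erase] at hi
          have := hlt i hi.2.2
          have : i ≠ m + 1 := fun h => h1 (h ▸ hi.2.2)
          omega
      omega
    · have := ih (m + 2) (by omega) (hC.mono (Finset.erase_subset (m + 3) C)) (by omega)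
        fun i hi => by
          have := hlt i (Finset.mem_of_mem_erase hi)
          have : i ≠ m + 2 := fun h => h2 (h ▸ hi)
          have : i ≠ m + 3 := Finset.ne_of_mem_erase hi
          omega
      omega
  · have := ih (m + 3) (by omega) hC (by omega) fun i hi => by
      have := hlt i hi
      have : i ≠ m + 3 := fun h => h3 (h ▸ hi)
      omega
    have := trib_monotone (by omega : m + 3 ≤ m + 4)
    omega

theorem exists_le_of_trib_le_sum {B : Finset ℕ} (hB : IsTribRep B) {a : ℕ} (ha : 2 ≤ a)
    (h : trib a ≤ ∑ i ∈ B, trib i) : ∃ b ∈ B, a ≤ b := by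
  by_contra! hlt
  exact (hB.sum_trib_lt ha hlt).not_ge h

theorem eq_of_sum_trib_eq {A B : Finset ℕ} (hA : IsTribRep A) (hB : IsTribRep B)
    (h : ∑ i ∈ A, trib i = ∑ i ∈ B, trib i) : A = B := by
  induction A using Finset.induction_on_max generalizing B with
  | empty =>
    refine (Finset.eq_empty_of_forall_notMem fun b hb => ?_).symm
    have := Finset.single_le_sum (fun i _ => Nat.zero_le (trib i)) hb
    have := trib_pos (by have := hB.1 b hb; omega : 2 ≤ b)
    simp only [Finset.sum_empty] at h
    omega
  | insert a s hlt ih =>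
    have has : a ∉ s := fun h => lt_irrefl a (hlt a h)
    have ha := Finset.mem_insert_self a s
    obtain ⟨b, hb, hab⟩ := hB.exists_le_of_trib_le_sum (by have := hA.1 a ha; omega)
      (h ▸ Finset.single_le_sum (fun i _ => Nat.zero_le (trib i)) ha)
    obtain ⟨a', ha', hba'⟩ := hA.exists_le_of_trib_le_sum (by have := hB.1 b hb; omega)
      (h.symm ▸ Finset.single_le_sum (fun i _ => Nat.zero_le (trib i)) hb)
    have hba : b = a := by
      rcases Finset.mem_insert.1 ha' with rfl | ha'
      · omega
      · have := hlt a' ha'; omega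
    subst hba
    rw [← Finset.insert_erase hb]
    refine congrArg (insert b) (ih (hA.mono (Finset.subset_insert b s))
      (hB.mono (Finset.erase_subset b B)) ?_)
    rw [Finset.sum_insert has, ← Finset.add_sum_erase B trib hb] at h
    omega

theorem insert_of_forall_lt {s : Finset ℕ} (hs : IsTribRep s) {j : ℕ} (hj : 3 ≤ j)
    (hlt : ∀ i ∈ s, j < i) (hcarry : ¬(j + 1 ∈ s ∧ j + 2 ∈ s)) : IsTribRep (insert j s) := by
  refine ⟨fun i hi => ?_, fun i ⟨h0, h1, h2⟩ => ?_⟩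
  · rcases Finset.mem_insert.1 hi with rfl | hi
    exacts [hj, hs.1 i hi]
  · simp only [Finset.mem_insert] at h0 h1 h2
    rcases h0 with rfl | h0
    · exact hcarry ⟨h1.resolve_left (by omega), h2.resolve_left (by omega)⟩
    · have := hlt i h0
      exact hs.2 i ⟨h0, h1.resolve_left (by omega), h2.resolve_left (by omega)⟩

theorem exists_carry {s : Finset ℕ} (hs : IsTribRep s) {j : ℕ} (hj : 3 ≤ j)
    (hlt : ∀ i ∈ s, j < i) :
    ∃ B, IsTribRep B ∧
      ∀ r, ∑ i ∈ B, trib (i + r) = trib (j + r) + ∑ i ∈ s, trib (i + r) := by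
  induction s using Finset.strongInduction generalizing j with
  | H s ih =>
  by_cases hcarry : j + 1 ∈ s ∧ j + 2 ∈ s
  · obtain ⟨h1, h2⟩ := hcarry
    have hpair : {j + 1, j + 2} ⊆ s := Finset.insert_subset h1 (Finset.singleton_subset_iff.2 h2)
    have h3 : j + 3 ∉ s := fun h3 => hs.2 (j + 1) ⟨h1, h2, h3⟩
    obtain ⟨B, hB, hBsum⟩ := ih (s \ {j + 1, j + 2})
      (Finset.sdiff_ssubset hpair (Finset.insert_nonempty _ _))
      (hs.mono Finset.sdiff_subset) (j := j + 3) (by omega) fun i hi => by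
        simp only [Finset.mem_sdiff, Finset.mem_insert, Finset.mem_singleton] at hi
        have := hlt i hi.1
        have : i ≠ j + 3 := fun h => h3 (h ▸ hi.1)
        omega
    refine ⟨B, hB, fun r => ?_⟩
    rw [hBsum, ← Finset.sum_sdiff hpair, Finset.sum_pair (by omega)]
    have := trib_add_three (j + r)
    rw [show j + 3 + r = j + r + 3 by omega, show j + 1 + r = j + r + 1 by omega,
      show j + 2 + r = j + r + 2 by omega]
    omega
  · exact ⟨insert j s, hs.insert_of_forall_lt hj hlt hcarry,
      fun r => Finset.sum_insert fun h => lt_irrefl j (hlt j h)⟩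

theorem exists_wall_rep {s : Finset ℕ} (hs : IsTribRep s) (h34 : ¬(3 ∈ s ∧ 4 ∈ s)) :
    ∃ B, IsTribRep B ∧ ∑ i ∈ B, trib i = 1 + ∑ i ∈ s, trib i ∧
      ∑ i ∈ B, trib (i + 1) = 2 + ∑ i ∈ s, trib (i + 1) := by
  have ht3 : trib 3 = 1 := rfl
  have ht4 : trib 4 = 2 := rfl
  have ht5 : trib 5 = 4 := rfl
  by_cases h3 : 3 ∈ s
  · have h4 : 4 ∉ s := fun h4 => h34 ⟨h3, h4⟩
    obtain ⟨B, hB, hBsum⟩ := (hs.mono (Finset.erase_subset 3 s)).exists_carry (j := 4)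
      (by omega) fun i hi => by
        have := hs.1 i (Finset.mem_of_mem_erase hi)
        have : i ≠ 3 := Finset.ne_of_mem_erase hi
        have : i ≠ 4 := fun h => h4 (h ▸ Finset.mem_of_mem_erase hi)
        omega
    have hB0 := hBsum 0
    have hB1 := hBsum 1
    simp only [add_zero, Nat.reduceAdd, ht4, ht5] at hB0 hB1
    rw [← Finset.add_sum_erase s trib h3, ← Finset.add_sum_erase s (fun i => trib (i + 1)) h3]
    exact ⟨B, hB, by rw [hB0, ht3]; ring, by rw [hB1, ht4]; ring⟩
  · obtain ⟨B, hB, hBsum⟩ := hs.exists_carry (j := 3) le_rfl fun i hi => by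
      have := hs.1 i hi
      have : i ≠ 3 := fun h => h3 (h ▸ hi)
      omega
    have hB0 := hBsum 0
    have hB1 := hBsum 1
    simp only [add_zero, Nat.reduceAdd, ht3, ht4] at hB0 hB1
    exact ⟨B, hB, hB0, hB1⟩

theorem exists_shift_of_three_mem {S : Finset ℕ} (hS : IsTribRep S) (h3 : 3 ∈ S) :
    ∃ s, IsTribRep s ∧ ¬(3 ∈ s ∧ 4 ∈ s) ∧
      ∀ f : ℕ → ℕ, ∑ i ∈ S, f i = f 3 + ∑ i ∈ s, f (i + 1) := by
  let s := (S.erase 3).preimage (· + 1) (add_left_injective 1).injOn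
  have hmem : ∀ i, i ∈ s ↔ i + 1 ≠ 3 ∧ i + 1 ∈ S := by simp [s]
  have hmap : s.map (addRightEmbedding 1) = S.erase 3 := by
    ext i
    simp only [Finset.mem_map, hmem, addRightEmbedding_apply, Finset.mem_erase]
    constructor
    · rintro ⟨a, ha, rfl⟩
      exact ha
    · rintro ⟨hi3, hi⟩
      have := hS.1 i hi
      exact ⟨i - 1, by rw [Nat.sub_add_cancel (by omega)]; exact ⟨hi3, hi⟩, by omega⟩
  refine ⟨s, ⟨fun i hi => ?_, fun i ⟨h0, h1, h2⟩ => ?_⟩, fun ⟨h3', h4'⟩ => ?_, fun f => ?_⟩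
  · have := hS.1 _ ((hmem i).1 hi).2
    have := ((hmem i).1 hi).1
    omega
  · exact hS.2 (i + 1) ⟨((hmem _).1 h0).2, ((hmem _).1 h1).2, ((hmem _).1 h2).2⟩
  · exact hS.2 3 ⟨h3, ((hmem _).1 h3').2, ((hmem _).1 h4').2⟩
  · rw [← Finset.add_sum_erase S f h3, ← hmap, Finset.sum_map]
    rfl

end IsTribRep

/-- A wall term `w = ∑_{i∈S} T(i−1)` of a row of the Trithoff array whose
    first-column entry is `n = ∑_{i∈S} T(i)` satisfies `out(w) = n + 1`;
    that is, the wall term `w` is followed by `out(w) − 1`. -/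
theorem wall_followed_by_out_sub_one (S : Finset ℕ) (hS : IsTribRep S) (h3 : 3 ∈ S)
    (Sw : Finset ℕ) (hSw : IsTribRep Sw)
    (hw : ∑ i ∈ S, trib (i - 1) = ∑ i ∈ Sw, trib i) :
    ∑ i ∈ Sw, trib (i + 1) = (∑ i ∈ S, trib i) + 1 := by
  obtain ⟨s, hs, h34, hsplit⟩ := hS.exists_shift_of_three_mem h3
  obtain ⟨B, hB, hBval, hBout⟩ := hs.exists_wall_rep h34
  have hwB : Sw = B := hSw.eq_of_sum_trib_eq hB <| by
    rw [← hw, hsplit, hBval]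
    simp only [Nat.add_sub_cancel]
    rfl
  rw [hwB, hBout, hsplit]
  have ht3 : trib 3 = 1 := rfl
  omega
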